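/- The degreewise projection Φ : 𝒫_A → P_A, given in degree 1 by the composition of (0, id_{l₁})∗ : E(l, p₁⊕l₁) → E(l, l₁) with the projection E(l,l₁) → C(l,l₁), and in degree 0 by the projection E(l,l₀) → C(l,l₀), is a quasi-isomorphism of complexes of right A-modules; here P_A is the two-term complex C(l,l₁) →φ₁∗→ C(l,l₀) concentrated in homological degrees 1, 0. -/

import Mathlib

/-!
Shared framework: a `k`-linear Frobenius category `E` with projective objects `add r`,
its stable category `C = E̲` (realized as the category `SC` below), triangulated-structure
data on `C` (`TriData`), 2-Calabi–Yau via a Serre-duality pairing, rigid/maximal rigid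
objects, and module structures over (stable) endomorphism rings.
-/

namespace Paper

open CategoryTheory Limits

universe v u

variable (E : Type u) [Category.{v} E] [Preadditive E] [HasFiniteBiproducts E] [HasBinaryBiproducts E]

/-- An exact structure (in the sense of Quillen) on an additive category:
a distinguished class of kernel–cokernel pairs (`conflations`) satisfying the usual axioms. -/
structure ExactStr where
  /-- `conf i p` says that `x ⟶ᵢ y ⟶ₚ z` is a conflation. -/
  conf : ∀ ⦃x y z : E⦄, (x ⟶ y) → (y ⟶ z) → Prop
  conf_comp : ∀ ⦃x y z : E⦄ {i : x ⟶ y} {p : y ⟶ z}, conf i p → i ≫ p = 0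
  conf_isKernel : ∀ ⦃x y z : E⦄ {i : x ⟶ y} {p : y ⟶ z} (h : conf i p),
    Nonempty (IsLimit (KernelFork.ofι i (conf_comp h)))
  conf_isCokernel : ∀ ⦃x y z : E⦄ {i : x ⟶ y} {p : y ⟶ z} (h : conf i p),
    Nonempty (IsColimit (CokernelCofork.ofπ p (conf_comp h)))
  conf_split : ∀ x y : E, conf (biprod.inl : x ⟶ x ⊞ y) (biprod.snd : x ⊞ y ⟶ y)
  conf_iso : ∀ ⦃x y z x' y' z' : E⦄ {i : x ⟶ y} {p : y ⟶ z}
    (e₁ : x ≅ x') (e₂ : y ≅ y') (e₃ : z ≅ z'), conf i p →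
    conf (e₁.inv ≫ i ≫ e₂.hom) (e₂.inv ≫ p ≫ e₃.hom)
  defl_comp : ∀ ⦃x y z w v : E⦄ {i : x ⟶ y} {p : y ⟶ z} {j : v ⟶ z} {p' : z ⟶ w},
    conf i p → conf j p' → ∃ (u : E) (i'' : u ⟶ y), conf i'' (p ≫ p')
  infl_comp : ∀ ⦃x y z w v : E⦄ {i : x ⟶ y} {p : y ⟶ v} {i' : y ⟶ z} {p' : z ⟶ w},
    conf i p → conf i' p' → ∃ (u : E) (q : z ⟶ u), conf (i ≫ i') q
  conf_pullback : ∀ ⦃x y z : E⦄ {i : x ⟶ y} {p : y ⟶ z}, conf i p →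
    ∀ ⦃z' : E⦄ (f : z' ⟶ z), ∃ (y' : E) (f' : y' ⟶ y) (p' : y' ⟶ z') (i' : x ⟶ y'),
      conf i' p' ∧ IsPullback f' p' p f
  conf_pushout : ∀ ⦃x y z : E⦄ {i : x ⟶ y} {p : y ⟶ z}, conf i p →
    ∀ ⦃x' : E⦄ (f : x ⟶ x'), ∃ (y' : E) (f' : y ⟶ y') (i' : x' ⟶ y') (p' : y' ⟶ z),
      conf i' p' ∧ IsPushout f i i' f'

variable {E}

namespace ExactStr

variable (S : ExactStr E)

/-- `p` is a deflation (admissible epimorphism). -/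
def IsDeflation {y z : E} (p : y ⟶ z) : Prop := ∃ (x : E) (i : x ⟶ y), S.conf i p

/-- `i` is an inflation (admissible monomorphism). -/
def IsInflation {x y : E} (i : x ⟶ y) : Prop := ∃ (z : E) (p : y ⟶ z), S.conf i p

/-- Projective object relative to the exact structure. -/
def IsProj (P : E) : Prop :=
  ∀ ⦃y z : E⦄ (p : y ⟶ z), S.IsDeflation p → ∀ f : P ⟶ z, ∃ g : P ⟶ y, g ≫ p = f

/-- Injective object relative to the exact structure. -/
def IsInj (I : E) : Prop :=
  ∀ ⦃x y : E⦄ (i : x ⟶ y), S.IsInflation i → ∀ f : x ⟶ I, ∃ g : y ⟶ I, i ≫ g = f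

end ExactStr

/-- `y ∈ add x`: `y` is a direct summand of a finite direct sum of copies of `x`. -/
def InAdd (x y : E) : Prop :=
  ∃ (n : ℕ) (s : y ⟶ ⨁ (fun _ : Fin n => x)) (t : (⨁ fun _ : Fin n => x) ⟶ y), s ≫ t = 𝟙 y

variable (E) in
/-- A Frobenius exact category with projectives `= add r`:
enough projectives and injectives, projectives and injectives coincide,
and the projective objects are exactly the objects of `add r`. -/
structure Frobenius extends ExactStr E where
  enough_proj : ∀ x : E, ∃ (P : E) (p : P ⟶ x), toExactStr.IsProj P ∧ toExactStr.IsDeflation p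
  enough_inj : ∀ x : E, ∃ (I : E) (i : x ⟶ I), toExactStr.IsInj I ∧ toExactStr.IsInflation i
  proj_iff_inj : ∀ P : E, toExactStr.IsProj P ↔ toExactStr.IsInj P
  /-- the projective generator -/
  r : E
  proj_iff_add : ∀ P : E, toExactStr.IsProj P ↔ InAdd r P

namespace Frobenius

variable (k : Type) [Field k] [CategoryTheory.Linear k E]

variable (S : Frobenius E)

/-- An object of `E` is *good* if it is isomorphic in `E` to `x' ⊕ r` for some `x'`. -/
def Good (x : E) : Prop := ∃ x' : E, Nonempty (x ≅ x' ⊞ S.r)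

/-- The `k`-submodule of `x ⟶ y` of morphisms factoring through a projective object. -/
def projIdeal (x y : E) : Submodule k (x ⟶ y) :=
  Submodule.span k {f | ∃ (P : E) (g : x ⟶ P) (h : P ⟶ y), S.IsProj P ∧ f = g ≫ h}

lemma leftComp_projIdeal {x y z : E} (f : x ⟶ y) {g : y ⟶ z}
    (hg : g ∈ S.projIdeal k y z) : f ≫ g ∈ S.projIdeal k x z := by
  have : S.projIdeal k y z ≤ (S.projIdeal k x z).comap (Linear.leftComp k z f) := by
    rw [projIdeal, Submodule.span_le]
    rintro u ⟨P, a, b, hP, rfl⟩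
    exact Submodule.subset_span ⟨P, f ≫ a, b, hP, by simp [Linear.leftComp]⟩
  exact this hg

lemma rightComp_projIdeal {x y z : E} {f : x ⟶ y} (hf : f ∈ S.projIdeal k x y)
    (g : y ⟶ z) : f ≫ g ∈ S.projIdeal k x z := by
  have : S.projIdeal k x y ≤ (S.projIdeal k x z).comap (Linear.rightComp k x g) := by
    rw [projIdeal, Submodule.span_le]
    rintro u ⟨P, a, b, hP, rfl⟩
    exact Submodule.subset_span ⟨P, a, b ≫ g, hP, by simp [Linear.rightComp]⟩
  exact this hf

/-- Hom-spaces of the stable category `C = E̲`. -/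
def SHom (x y : E) : Type _ := (x ⟶ y) ⧸ S.projIdeal k x y

instance (x y : E) : AddCommGroup (S.SHom k x y) :=
  inferInstanceAs (AddCommGroup ((x ⟶ y) ⧸ S.projIdeal k x y))

instance (x y : E) : Module k (S.SHom k x y) :=
  inferInstanceAs (Module k ((x ⟶ y) ⧸ S.projIdeal k x y))

/-- Class of a morphism of `E` in the stable category. -/
def toS {x y : E} (f : x ⟶ y) : S.SHom k x y := Submodule.Quotient.mk f

lemma toS_surjective (x y : E) : Function.Surjective (S.toS k (x := x) (y := y)) :=
  Submodule.Quotient.mk_surjective _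

end Frobenius

/-- The stable category `C = E̲` of the Frobenius category `E`:
same objects, morphisms modulo those factoring through a projective object. -/
def SC (_S : Frobenius E) (k : Type) [Field k] [CategoryTheory.Linear k E] : Type u := E

namespace SC

variable {S : Frobenius E} {k : Type} [Field k] [CategoryTheory.Linear k E]

/-- The canonical identification of objects of `E` with objects of the stable category. -/
abbrev of (S : Frobenius E) (k : Type) [Field k] [CategoryTheory.Linear k E] (x : E) :
    SC S k := x

/-- The object of `E` underlying an object of the stable category. -/
abbrev un (x : SC S k) : E := x

instance : Category (SC S k) where
  Hom x y := S.SHom k x.un y.un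
  id x := S.toS k (𝟙 x.un)
  comp {x y z} f g := by
    refine Quotient.liftOn₂ f g (fun f g => S.toS k (f ≫ g)) ?_
    intro a₁ b₁ a₂ b₂ h₁ h₂
    have h₁' : a₁ - a₂ ∈ S.projIdeal k x.un y.un :=
      (Submodule.Quotient.eq _).mp (Quotient.sound h₁)
    have h₂' : b₁ - b₂ ∈ S.projIdeal k y.un z.un :=
      (Submodule.Quotient.eq _).mp (Quotient.sound h₂)
    show S.toS k (a₁ ≫ b₁) = S.toS k (a₂ ≫ b₂)
    unfold Frobenius.toS
    refine (Submodule.Quotient.eq _).mpr ?_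
    have h : a₁ ≫ b₁ - a₂ ≫ b₂ = a₁ ≫ (b₁ - b₂) + (a₁ - a₂) ≫ b₂ := by
      simp only [Preadditive.comp_sub, Preadditive.sub_comp]; abel
    rw [h]
    exact add_mem (S.leftComp_projIdeal k _ h₂') (S.rightComp_projIdeal k h₁' _)
  id_comp {x y} f := by
    obtain ⟨f, rfl⟩ := S.toS_surjective k _ _ f
    show S.toS k (𝟙 _ ≫ f) = S.toS k f
    rw [Category.id_comp]
  comp_id {x y} f := by
    obtain ⟨f, rfl⟩ := S.toS_surjective k _ _ f
    show S.toS k (f ≫ 𝟙 _) = S.toS k f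
    rw [Category.comp_id]
  assoc {w x y z} f g h := by
    obtain ⟨f, rfl⟩ := S.toS_surjective k _ _ f
    obtain ⟨g, rfl⟩ := S.toS_surjective k _ _ g
    obtain ⟨h, rfl⟩ := S.toS_surjective k _ _ h
    show S.toS k ((f ≫ g) ≫ h) = S.toS k (f ≫ (g ≫ h))
    rw [Category.assoc]

/-- The canonical functor map on morphisms: the class in the stable category of a
morphism of `E`, seen as a morphism of `SC S k`. -/
def toSC (S : Frobenius E) (k : Type) [Field k] [CategoryTheory.Linear k E]
    {x y : E} (f : x ⟶ y) : SC.of S k x ⟶ SC.of S k y := S.toS k f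

lemma toSC_comp {x y z : E} (f : x ⟶ y) (g : y ⟶ z) :
    toSC S k f ≫ toSC S k g = toSC S k (f ≫ g) := rfl

lemma toSC_surjective (x y : E) :
    Function.Surjective (toSC S k (x := x) (y := y)) :=
  Submodule.Quotient.mk_surjective _

instance : Preadditive (SC S k) where
  homGroup x y := inferInstanceAs (AddCommGroup (S.SHom k x.un y.un))
  add_comp x y z f f' g := by
    obtain ⟨f, rfl⟩ := S.toS_surjective k _ _ f
    obtain ⟨f', rfl⟩ := S.toS_surjective k _ _ f'
    obtain ⟨g, rfl⟩ := S.toS_surjective k _ _ g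
    show S.toS k ((f + f') ≫ g) = S.toS k (f ≫ g) + S.toS k (f' ≫ g)
    rw [Preadditive.add_comp]; rfl
  comp_add x y z f g g' := by
    obtain ⟨f, rfl⟩ := S.toS_surjective k _ _ f
    obtain ⟨g, rfl⟩ := S.toS_surjective k _ _ g
    obtain ⟨g', rfl⟩ := S.toS_surjective k _ _ g'
    show S.toS k (f ≫ (g + g')) = S.toS k (f ≫ g) + S.toS k (f ≫ g')
    rw [Preadditive.comp_add]; rfl

instance : CategoryTheory.Linear k (SC S k) where
  homModule x y := inferInstanceAs (Module k (S.SHom k x.un y.un))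
  smul_comp x y z r f g := by
    obtain ⟨f, rfl⟩ := S.toS_surjective k _ _ f
    obtain ⟨g, rfl⟩ := S.toS_surjective k _ _ g
    show S.toS k ((r • f) ≫ g) = r • S.toS k (f ≫ g)
    rw [Linear.smul_comp]; rfl
  comp_smul x y z f r g := by
    obtain ⟨f, rfl⟩ := S.toS_surjective k _ _ f
    obtain ⟨g, rfl⟩ := S.toS_surjective k _ _ g
    show S.toS k (f ≫ (r • g)) = r • S.toS k (f ≫ g)
    rw [Linear.comp_smul]; rfl

end SC

end Paper

section EndModules

namespace Paper

open CategoryTheory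

/-- In any preadditive category, `x ⟶ y` is a right module over `End x`
(i.e. a left module over `(End x)ᵐᵒᵖ`), acting by precomposition. -/
instance moduleEndLeftOp {C : Type*} [Category C] [Preadditive C] {x y : C} :
    Module (End x)ᵐᵒᵖ (x ⟶ y) where
  smul a f := a.unop ≫ f
  one_smul f := Category.id_comp f
  mul_smul a b f := by
    show (MulOpposite.unop a ≫ MulOpposite.unop b) ≫ f =
      MulOpposite.unop a ≫ MulOpposite.unop b ≫ f
    rw [Category.assoc]
  smul_zero a := Limits.comp_zero
  smul_add a f g := Preadditive.comp_add _ _ _ _ _ _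
  add_smul a b f := Preadditive.add_comp _ _ _ _ _ _
  zero_smul f := Limits.zero_comp

lemma op_smul_def {C : Type*} [Category C] [Preadditive C] {x y : C}
    (a : (End x)ᵐᵒᵖ) (f : x ⟶ y) : a • f = a.unop ≫ f := rfl

lemma end_smul_def {C : Type*} [Category C] [Preadditive C] {x y : C}
    (a : End y) (f : x ⟶ y) : a • f = f ≫ a := rfl

/-- Postcomposition as a map of right `End x`-modules. -/
def postcompL {C : Type*} [Category C] [Preadditive C] {x y z : C} (f : y ⟶ z) :
    (x ⟶ y) →ₗ[(End x)ᵐᵒᵖ] (x ⟶ z) where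
  toFun g := g ≫ f
  map_add' g g' := Preadditive.add_comp _ _ _ _ _ _
  map_smul' a g := by
    show (a.unop ≫ g) ≫ f = a.unop ≫ g ≫ f
    rw [Category.assoc]

/-- Precomposition as a map of left `End z`-modules. -/
def precompL {C : Type*} [Category C] [Preadditive C] {x y z : C} (f : x ⟶ y) :
    (y ⟶ z) →ₗ[End z] (x ⟶ z) where
  toFun g := f ≫ g
  map_add' g g' := Preadditive.comp_add _ _ _ _ _ _
  map_smul' a g := by
    show f ≫ g ≫ a = (f ≫ g) ≫ a
    rw [Category.assoc]

end Paper

end EndModules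

namespace Paper

open CategoryTheory Limits

section Tri

variable {E : Type u} [Category.{v} E] [Preadditive E] [HasFiniteBiproducts E]
  [HasBinaryBiproducts E]

/-- The data and axioms of the triangulated structure on the stable category `C = SC S k`
of the Frobenius category `E` (suspension `Σ`, distinguished triangles), together with the
assumptions that `C` is 2-Calabi–Yau (formulated via a nondegenerate associative Serre
pairing `C(x,y) × C(y,Σ²x) → k`, functorial in both variables), Hom-finite over `k`, and
has split idempotents. -/
structure TriData (S : Frobenius E) (k : Type) [Field k] [CategoryTheory.Linear k E] where
  /-- the suspension functor -/
  susp : SC S k ⥤ SC S k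
  equiv : susp.IsEquivalence
  additive : susp.Additive
  linear : Functor.Linear k susp
  /-- distinguished triangles `x ⟶ y ⟶ z ⟶ Σ x` -/
  dtri : ∀ ⦃x y z : SC S k⦄, (x ⟶ y) → (y ⟶ z) → (z ⟶ susp.obj x) → Prop
  dtri_comp_zero : ∀ ⦃x y z : SC S k⦄ {f : x ⟶ y} {g : y ⟶ z} {h : z ⟶ susp.obj x},
    dtri f g h → f ≫ g = 0
  dtri_rot : ∀ ⦃x y z : SC S k⦄ {f : x ⟶ y} {g : y ⟶ z} {h : z ⟶ susp.obj x},
    dtri f g h → dtri g h (-(susp.map f))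
  dtri_complete : ∀ ⦃x y : SC S k⦄ (f : x ⟶ y),
    ∃ (z : SC S k) (g : y ⟶ z) (h : z ⟶ susp.obj x), dtri f g h
  dtri_ext : ∀ ⦃x y z x' y' z' : SC S k⦄
    {f : x ⟶ y} {g : y ⟶ z} {h : z ⟶ susp.obj x}
    {f' : x' ⟶ y'} {g' : y' ⟶ z'} {h' : z' ⟶ susp.obj x'},
    dtri f g h → dtri f' g' h' → ∀ (a : x ⟶ x') (b : y ⟶ y'), f ≫ b = a ≫ f' →
      ∃ c : z ⟶ z', g ≫ c = b ≫ g' ∧ h ≫ susp.map a = c ≫ h'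
  /-- conflations of `E` induce distinguished triangles in the stable category -/
  conf_dtri : ∀ ⦃x y z : E⦄ {i : x ⟶ y} {p : y ⟶ z}, S.conf i p →
    ∃ h : SC.of S k z ⟶ susp.obj (SC.of S k x), dtri (SC.toSC S k i) (SC.toSC S k p) h
  /-- the 2-Calabi–Yau (Serre duality) pairing `C(x,y) ⊗ C(y,Σ²x) → k` -/
  pair : ∀ (x y : SC S k), (x ⟶ y) →ₗ[k] (y ⟶ susp.obj (susp.obj x)) →ₗ[k] k
  pair_assoc : ∀ ⦃x y z : SC S k⦄ (f : x ⟶ y) (g : y ⟶ z)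
    (h : z ⟶ susp.obj (susp.obj x)), pair x z (f ≫ g) h = pair x y f (g ≫ h)
  pair_nondeg_left : ∀ ⦃x y : SC S k⦄ (f : x ⟶ y), (∀ g, pair x y f g = 0) → f = 0
  pair_nondeg_right : ∀ ⦃x y : SC S k⦄ (g : y ⟶ susp.obj (susp.obj x)),
    (∀ f, pair x y f g = 0) → g = 0
  /-- `C` is Hom-finite -/
  homFinite : ∀ x y : SC S k, FiniteDimensional k (x ⟶ y)
  /-- `C` has split idempotents -/
  idem : IsIdempotentComplete (SC S k)

namespace TriData

variable {k : Type} [Field k] [CategoryTheory.Linear k E] {S : Frobenius E}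
variable (T : TriData S k)

/-- `x` is rigid: `C(x, Σx) = 0`. -/
def Rigid (x : SC S k) : Prop := ∀ f : x ⟶ T.susp.obj x, f = 0

/-- `y ∈ add x` in the stable category. -/
def AddSummand (_T : TriData S k) (x y : SC S k) : Prop :=
  ∃ (n : ℕ) (s : y ⟶ SC.of S k (⨁ fun _ : Fin n => x.un))
    (t : SC.of S k (⨁ fun _ : Fin n => x.un) ⟶ y), s ≫ t = 𝟙 y

/-- `x` is maximal rigid: it is rigid and `C(x ⊕ y, Σ(x ⊕ y)) = 0` implies `y ∈ add x`
(formulated componentwise). -/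
def MaxRigid (x : SC S k) : Prop :=
  T.Rigid x ∧ ∀ y : SC S k, T.Rigid y → (∀ f : x ⟶ T.susp.obj y, f = 0) →
    (∀ f : y ⟶ T.susp.obj x, f = 0) → T.AddSummand x y

/-- `Σ² x ≅ x` in the stable category. -/
def SuspSqFix (x : SC S k) : Prop := Nonempty (T.susp.obj (T.susp.obj x) ≅ x)

end TriData

end Tri

/-- A ring is self-injective if it is injective as a (left) module over itself. -/
def IsSelfInjectiveRing (A : Type*) [Ring A] : Prop := Module.Injective A A

end Paper

namespace Paper

open CategoryTheory Limits

noncomputable section ATensor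

set_option linter.unusedSectionVars false

variable (k : Type*) [CommRing k]
variable (A : Type*) [Ring A] [Algebra k A]
variable (M : Type*) [AddCommGroup M] [Module k M] [Module Aᵐᵒᵖ M]
variable (N : Type*) [AddCommGroup N] [Module k N] [Module A N]

/-- The relations defining the tensor product `M ⊗_A N` of a right `A`-module and a
left `A`-module over the (possibly noncommutative) `k`-algebra `A`, as a quotient of
`M ⊗_k N`. -/
def atensorRel : Submodule k (TensorProduct k M N) :=
  Submodule.span k {t | ∃ (m : M) (a : A) (n : N),
    t = (MulOpposite.op a • m) ⊗ₜ[k] n - m ⊗ₜ[k] (a • n)}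

/-- The tensor product `M ⊗_A N` of a right `A`-module and a left `A`-module over the
(possibly noncommutative) `k`-algebra `A`. -/
def ATensor : Type _ := TensorProduct k M N ⧸ atensorRel k A M N

instance : AddCommGroup (ATensor k A M N) :=
  inferInstanceAs (AddCommGroup (TensorProduct k M N ⧸ atensorRel k A M N))

instance : Module k (ATensor k A M N) :=
  inferInstanceAs (Module k (TensorProduct k M N ⧸ atensorRel k A M N))

namespace ATensor

/-- The canonical balanced bilinear map `M × N → M ⊗_A N`. -/
def mkBilin : M →ₗ[k] N →ₗ[k] ATensor k A M N :=
  (TensorProduct.mk k M N).compr₂ (atensorRel k A M N).mkQ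

/-- `m ⊗ n` in `M ⊗_A N`. -/
def mk (m : M) (n : N) : ATensor k A M N := mkBilin k A M N m n

variable {k A M N}

lemma mk_smul (m : M) (a : A) (n : N) :
    mk k A M N (MulOpposite.op a • m) n = mk k A M N m (a • n) := by
  unfold mk mkBilin
  show Submodule.Quotient.mk _ = Submodule.Quotient.mk _
  rw [Submodule.Quotient.eq]
  exact Submodule.subset_span ⟨m, a, n, rfl⟩

lemma mk_surjective_span (t : ATensor k A M N) :
    ∃ s : TensorProduct k M N, Submodule.Quotient.mk s = t :=
  Submodule.Quotient.mk_surjective _ t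

variable {P : Type*} [AddCommGroup P] [Module k P]

/-- Lift a balanced `k`-bilinear map to the tensor product `M ⊗_A N`. -/
def lift (φ : M →ₗ[k] N →ₗ[k] P)
    (bal : ∀ (m : M) (a : A) (n : N), φ (MulOpposite.op a • m) n = φ m (a • n)) :
    ATensor k A M N →ₗ[k] P := by
  refine Submodule.liftQ _ (TensorProduct.lift φ) ?_
  rw [atensorRel, Submodule.span_le]
  rintro t ⟨m, a, n, rfl⟩
  simp only [SetLike.mem_coe, LinearMap.mem_ker, map_sub, TensorProduct.lift.tmul]
  rw [bal m a n, sub_self]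

@[simp] lemma lift_mk (φ : M →ₗ[k] N →ₗ[k] P) (bal) (m : M) (n : N) :
    lift φ bal (mk k A M N m n) = φ m n := rfl

lemma hom_ext {f g : ATensor k A M N →ₗ[k] P}
    (h : ∀ m n, f (mk k A M N m n) = g (mk k A M N m n)) : f = g := by
  apply Submodule.linearMap_qext
  apply TensorProduct.ext'
  intro m n
  exact h m n

variable {M' : Type*} [AddCommGroup M'] [Module k M'] [Module Aᵐᵒᵖ M']
variable {N' : Type*} [AddCommGroup N'] [Module k N'] [Module A N']

/-- Functoriality of `M ⊗_A N` in the right `A`-module variable. -/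
def mapLeft (f : M →ₗ[k] M') (hf : ∀ (a : A) (m : M),
    f (MulOpposite.op a • m) = MulOpposite.op a • f m) :
    ATensor k A M N →ₗ[k] ATensor k A M' N :=
  lift ((mkBilin k A M' N).comp f) (by
    intro m a n
    simp only [LinearMap.comp_apply, hf]
    exact mk_smul _ _ _)

/-- Functoriality of `M ⊗_A N` in the left `A`-module variable. -/
def mapRight (g : N →ₗ[k] N') (hg : ∀ (a : A) (n : N), g (a • n) = a • g n) :
    ATensor k A M N →ₗ[k] ATensor k A M N' :=
  lift ((mkBilin k A M N').compl₂ g) (by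
    intro m a n
    simp only [LinearMap.compl₂_apply, hg]
    exact mk_smul _ _ _)

@[simp] lemma mapLeft_mk (f : M →ₗ[k] M') (hf) (m : M) (n : N) :
    mapLeft (N := N) f hf (mk k A M N m n) = mk k A M' N (f m) n := rfl

@[simp] lemma mapRight_mk (g : N →ₗ[k] N') (hg) (m : M) (n : N) :
    mapRight (M := M) g hg (mk k A M N m n) = mk k A M N' m (g n) := rfl

end ATensor

end ATensor

end Paper

namespace Paper

open CategoryTheory Limits

section StableModules

variable {E : Type u} [Category.{v} E] [Preadditive E] [HasFiniteBiproducts E]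
  [HasBinaryBiproducts E]
variable (k : Type) [Field k] [CategoryTheory.Linear k E]
variable (S : Frobenius E)

namespace Frobenius

/-- Precomposition on stable Hom spaces. -/
def preS {x' x y : E} (a : x' ⟶ x) : S.SHom k x y →ₗ[k] S.SHom k x' y :=
  Submodule.mapQ _ _ (Linear.leftComp k y a)
    (fun f hf => S.leftComp_projIdeal k a hf)

/-- Postcomposition on stable Hom spaces. -/
def postS {x y y' : E} (b : y ⟶ y') : S.SHom k x y →ₗ[k] S.SHom k x y' :=
  Submodule.mapQ _ _ (Linear.rightComp k x b)
    (fun f hf => S.rightComp_projIdeal k hf b)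

@[simp] lemma preS_toS {x' x y : E} (a : x' ⟶ x) (f : x ⟶ y) :
    S.preS k a (S.toS k f) = S.toS k (a ≫ f) := rfl

@[simp] lemma postS_toS {x y y' : E} (b : y ⟶ y') (f : x ⟶ y) :
    S.postS k b (S.toS k f) = S.toS k (f ≫ b) := rfl

/-- `C(x,y)` is a right `E(x,x)`-module. -/
instance shomModuleOp (x y : E) : Module (End x)ᵐᵒᵖ (S.SHom k x y) where
  smul a u := S.preS k a.unop u
  one_smul u := by
    obtain ⟨f, rfl⟩ := S.toS_surjective k _ _ u
    show S.toS k ((𝟙 x : End x) ≫ f) = S.toS k f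
    rw [Category.id_comp]
  mul_smul a b u := by
    obtain ⟨f, rfl⟩ := S.toS_surjective k _ _ u
    show S.toS k ((MulOpposite.unop a ≫ MulOpposite.unop b) ≫ f)
      = S.toS k (MulOpposite.unop a ≫ MulOpposite.unop b ≫ f)
    rw [Category.assoc]
  smul_zero a := map_zero _
  smul_add a u v := map_add _ _ _
  add_smul a b u := by
    obtain ⟨f, rfl⟩ := S.toS_surjective k _ _ u
    show S.toS k ((MulOpposite.unop a + MulOpposite.unop b) ≫ f)
      = S.toS k (MulOpposite.unop a ≫ f) + S.toS k (MulOpposite.unop b ≫ f)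
    rw [Preadditive.add_comp]
    rfl
  zero_smul u := by
    obtain ⟨f, rfl⟩ := S.toS_surjective k _ _ u
    show S.toS k ((0 : x ⟶ x) ≫ f) = 0
    rw [Limits.zero_comp]
    rfl

lemma shom_op_smul_def {x y : E} (a : (End x)ᵐᵒᵖ) (u : S.SHom k x y) :
    a • u = S.preS k a.unop u := rfl

/-- `C(x,y)` is a left `E(y,y)`-module (with the `End`-multiplication convention
`a * b = b ≫ a`, so the action is by postcomposition). -/
instance shomModuleEnd (x y : E) : Module (End y) (S.SHom k x y) where
  smul b u := S.postS k b u
  one_smul u := by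
    obtain ⟨f, rfl⟩ := S.toS_surjective k _ _ u
    show S.toS k (f ≫ (𝟙 y : End y)) = S.toS k f
    rw [Category.comp_id]
  mul_smul a b u := by
    obtain ⟨f, rfl⟩ := S.toS_surjective k _ _ u
    show S.toS k (f ≫ (b ≫ a)) = S.toS k ((f ≫ b) ≫ a)
    rw [Category.assoc]
  smul_zero a := map_zero _
  smul_add a u v := map_add _ _ _
  add_smul a b u := by
    obtain ⟨f, rfl⟩ := S.toS_surjective k _ _ u
    show S.toS k (f ≫ (a + b)) = S.toS k (f ≫ a) + S.toS k (f ≫ b)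
    rw [Preadditive.comp_add]
    rfl
  zero_smul u := by
    obtain ⟨f, rfl⟩ := S.toS_surjective k _ _ u
    show S.toS k (f ≫ (0 : y ⟶ y)) = 0
    rw [Limits.comp_zero]
    rfl

lemma shom_end_smul_def {x y : E} (b : End y) (u : S.SHom k x y) :
    b • u = S.postS k b u := rfl

end Frobenius

end StableModules

section TensorFunctor

variable (A : Type v) [Ring A]
variable (M : Type v) [AddCommGroup M] [Module Aᵐᵒᵖ M]

/-- The functor `M ⊗_A — : A-Mod ⥤ Ab` (realized with `ℤ`-coefficients),
for a right `A`-module `M`. -/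
noncomputable def atensorFunctor : ModuleCat.{v} A ⥤ ModuleCat.{v} ℤ where
  obj N := ModuleCat.of ℤ (ATensor ℤ A M N)
  map {N N'} g := ModuleCat.ofHom (ATensor.mapRight (M := M) (g.hom.toAddMonoidHom.toIntLinearMap)
    (fun a n => map_smul g.hom a n))
  map_id N := by
    apply ModuleCat.hom_ext
    apply ATensor.hom_ext
    intro m n
    rfl
  map_comp {N N' N''} g h := by
    apply ModuleCat.hom_ext
    apply ATensor.hom_ext
    intro m n
    rfl

noncomputable instance : (atensorFunctor.{v} A M).Additive where
  map_add := by
    intros N N' g h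
    apply ModuleCat.hom_ext
    apply ATensor.hom_ext
    intro m n
    show ATensor.mk ℤ A M _ m ((g + h).hom n) =
      ATensor.mk ℤ A M _ m (g.hom n) + ATensor.mk ℤ A M _ m (h.hom n)
    rw [ModuleCat.hom_add, LinearMap.add_apply]
    exact map_add (ATensor.mkBilin ℤ A M _ m) _ _

end TensorFunctor

end Paper

namespace Paper

open CategoryTheory Limits

section TwoTerm

universe w

variable {R : Type w} [Ring R]

/-- The terms of the two-term chain complex `⋯ → 0 → M → N`. -/
noncomputable def twoTermX (M N : ModuleCat.{w} R) : ℕ → ModuleCat.{w} R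
  | 0 => N
  | 1 => M
  | _ + 2 => ModuleCat.of R PUnit

/-- The differentials of the two-term chain complex `⋯ → 0 → M → N`. -/
noncomputable def twoTermD {M N : ModuleCat.{w} R} (f : M ⟶ N) :
    ∀ n : ℕ, twoTermX M N (n + 1) ⟶ twoTermX M N n
  | 0 => f
  | _ + 1 => 0

lemma twoTermSq {M N : ModuleCat.{w} R} (f : M ⟶ N) :
    ∀ n : ℕ, twoTermD f (n + 1) ≫ twoTermD f n = 0 :=
  fun _ => Limits.zero_comp

/-- The `ℕ`-indexed chain complex `⋯ → 0 → M → N` (with `M` in homological degree 1 and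
`N` in degree 0) associated to a morphism `f : M ⟶ N` of modules. -/
noncomputable def twoTermChain {M N : ModuleCat.{w} R} (f : M ⟶ N) :
    ChainComplex (ModuleCat.{w} R) ℕ :=
  ChainComplex.of (twoTermX M N) (twoTermD f) (twoTermSq f)

/-- The two-term complex of a morphism `f : M ⟶ N`, as a `ℤ`-indexed cochain complex
concentrated in cohomological degrees `-1, 0` (i.e. homological degrees `1, 0`). -/
noncomputable def twoTermCochainZ {M N : ModuleCat.{w} R} (f : M ⟶ N) :
    CochainComplex (ModuleCat.{w} R) ℤ :=
  ((ComplexShape.embeddingUpIntLE (0 : ℤ)).extendFunctor (ModuleCat.{w} R)).obj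
    (twoTermChain f)

end TwoTerm

section Thick

variable {K : Type*} [Category K] [Preadditive K] [HasZeroObject K] [HasShift K ℤ]
  [∀ n : ℤ, (CategoryTheory.shiftFunctor K n).Additive] [Pretriangulated K]

/-- `IsThickMember G X`: `X` belongs to the thick closure of `add G`, i.e. to the
smallest triangulated subcategory of `K` containing `G` and closed under direct
summands. -/
inductive IsThickMember (G : K) : K → Prop
  | base : IsThickMember G G
  | of_iso {X Y : K} : Nonempty (X ≅ Y) → IsThickMember G X → IsThickMember G Y
  | zero {Z : K} : Limits.IsZero Z → IsThickMember G Z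
  | shift {X : K} (n : ℤ) : IsThickMember G X → IsThickMember G (X⟦n⟧)
  | cone {T : Pretriangulated.Triangle K} (hT : T ∈ distTriang K) :
      IsThickMember G T.obj₁ → IsThickMember G T.obj₂ → IsThickMember G T.obj₃
  | summand {X Y : K} (s : Y ⟶ X) (r : X ⟶ Y) :
      s ≫ r = 𝟙 Y → IsThickMember G X → IsThickMember G Y

end Thick

end Paper

namespace Paper

open CategoryTheory Limits

section TensorFunctorL

variable (A : Type v) [Ring A]
variable (N : Type v) [AddCommGroup N] [Module A N]

/-- The functor `— ⊗_A N : Mod-A ⥤ Ab` (realized with `ℤ`-coefficients),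
for a left `A`-module `N`. -/
noncomputable def atensorFunctorL : ModuleCat.{v} Aᵐᵒᵖ ⥤ ModuleCat.{v} ℤ where
  obj M := ModuleCat.of ℤ (ATensor ℤ A M N)
  map {M M'} g := ModuleCat.ofHom (ATensor.mapLeft (N := N) (g.hom.toAddMonoidHom.toIntLinearMap)
    (fun a m => map_smul g.hom (MulOpposite.op a) m))
  map_id M := by
    apply ModuleCat.hom_ext
    apply ATensor.hom_ext
    intro m n
    rfl
  map_comp {M M' M''} g h := by
    apply ModuleCat.hom_ext
    apply ATensor.hom_ext
    intro m n
    rfl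

noncomputable instance : (atensorFunctorL.{v} A N).Additive where
  map_add := by
    intros M M' g h
    apply ModuleCat.hom_ext
    apply ATensor.hom_ext
    intro m n
    show ATensor.mk ℤ A _ N ((g + h).hom m) n =
      ATensor.mk ℤ A _ N (g.hom m) n + ATensor.mk ℤ A _ N (h.hom m) n
    rw [ModuleCat.hom_add, LinearMap.add_apply]
    unfold ATensor.mk
    rw [map_add, LinearMap.add_apply]

end TensorFunctorL

end Paper

set_option linter.unusedSectionVars false
set_option linter.unusedVariables false

namespace Paper

open CategoryTheory Limits

universe v' u'

variable {E : Type u'} [Category.{v'} E] [Preadditive E] [HasFiniteBiproducts E]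
  [HasBinaryBiproducts E]
variable (k : Type) [Field k] [CategoryTheory.Linear k E]
variable (S : Frobenius E)

/-- The projection `E(x',x) → C(x',x)` as a map of right `E(x',x')`-modules. -/
def toSLinOp (x' x : E) : (x' ⟶ x) →ₗ[(End x')ᵐᵒᵖ] S.SHom k x' x where
  toFun f := S.toS k f
  map_add' f g := map_add (Submodule.mkQ _) _ _
  map_smul' a f := rfl

/-- Postcomposition `C(x,y) → C(x,y')` as a map of right `E(x,x)`-modules. -/
def postSLinOp {x y y' : E} (φ : y ⟶ y') :
    S.SHom k x y →ₗ[(End x)ᵐᵒᵖ] S.SHom k x y' where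
  toFun := S.postS k φ
  map_add' u v := map_add _ _ _
  map_smul' a u := by
    obtain ⟨f, rfl⟩ := S.toS_surjective k _ _ u
    show S.toS k ((MulOpposite.unop a ≫ f) ≫ φ) = S.toS k (MulOpposite.unop a ≫ (f ≫ φ))
    rw [Category.assoc]

section CalP

variable (l : E) {m Ωm p₁ p₂ p₃ l₁ l₀ : E}

/-- The terms of the complex `𝒫_A`. -/
noncomputable def calPX (p₁ p₂ p₃ l₁ l₀ : E) : ℕ → ModuleCat.{v'} ((End l)ᵐᵒᵖ)
  | 0 => ModuleCat.of _ (l ⟶ l₀)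
  | 1 => ModuleCat.of _ (l ⟶ p₁ ⊞ l₁)
  | 2 => ModuleCat.of _ (l ⟶ p₂)
  | 3 => ModuleCat.of _ (l ⟶ l₀ ⊞ p₃)
  | 4 => ModuleCat.of _ (l ⟶ l₁)
  | _ + 5 => ModuleCat.of _ PUnit

/-- The differentials of the complex `𝒫_A`. -/
noncomputable def calPd
    (g : Ωm ⟶ p₁) (g' : m ⊞ p₃ ⟶ p₂) (f' : p₂ ⟶ Ωm)
    (φ₁ : l₁ ⟶ l₀) (φ₀ : l₀ ⟶ m) (γ₁ : Ωm ⟶ l₁) (γ₀ : p₁ ⟶ l₀) :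
    ∀ n : ℕ, calPX l p₁ p₂ p₃ l₁ l₀ (n + 1) ⟶ calPX l p₁ p₂ p₃ l₁ l₀ n
  | 0 => ModuleCat.ofHom (postcompL (biprod.desc (-γ₀) φ₁))
  | 1 => ModuleCat.ofHom (postcompL (biprod.lift (f' ≫ g) (f' ≫ γ₁)))
  | 2 => ModuleCat.ofHom (postcompL (biprod.map φ₀ (𝟙 p₃) ≫ g'))
  | 3 => ModuleCat.ofHom (postcompL (biprod.lift φ₁ 0))
  | _ + 4 => 0

lemma calPsq
    (g : Ωm ⟶ p₁) (f : p₁ ⟶ m) (g' : m ⊞ p₃ ⟶ p₂) (f' : p₂ ⟶ Ωm)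
    (φ₁ : l₁ ⟶ l₀) (φ₀ : l₀ ⟶ m) (γ₁ : Ωm ⟶ l₁) (γ₀ : p₁ ⟶ l₀)
    (h2 : g' ≫ f' = 0) (hφ : φ₁ ≫ φ₀ = 0) (hpo : g ≫ γ₀ = γ₁ ≫ φ₁) :
    ∀ n : ℕ, calPd l g g' f' φ₁ φ₀ γ₁ γ₀ (n + 1) ≫ calPd l g g' f' φ₁ φ₀ γ₁ γ₀ n = 0
  | 0 => by
      ext u
      change (l ⟶ p₂) at u
      show (u ≫ biprod.lift (f' ≫ g) (f' ≫ γ₁)) ≫ biprod.desc (-γ₀) φ₁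
        = (0 : calPX l p₁ p₂ p₃ l₁ l₀ 2 ⟶ calPX l p₁ p₂ p₃ l₁ l₀ 0).hom u
      have e : (u ≫ biprod.lift (f' ≫ g) (f' ≫ γ₁)) ≫ biprod.desc (-γ₀) φ₁
          = u ≫ (f' ≫ (-(g ≫ γ₀) + γ₁ ≫ φ₁)) := by
        simp [biprod.lift_desc, Preadditive.comp_add, Preadditive.comp_neg,
          Category.assoc]
      rw [e, hpo]
      simp
      rfl
  | 1 => by
      have key : g' ≫ biprod.lift (f' ≫ g) (f' ≫ γ₁) = 0 := by
        apply biprod.hom_ext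
        · simp only [Category.assoc, biprod.lift_fst, Limits.zero_comp]
          rw [← Category.assoc, h2, Limits.zero_comp]
        · simp only [Category.assoc, biprod.lift_snd, Limits.zero_comp]
          rw [← Category.assoc, h2, Limits.zero_comp]
      ext u
      change (l ⟶ l₀ ⊞ p₃) at u
      show (u ≫ (biprod.map φ₀ (𝟙 p₃) ≫ g')) ≫ biprod.lift (f' ≫ g) (f' ≫ γ₁)
        = (0 : calPX l p₁ p₂ p₃ l₁ l₀ 3 ⟶ calPX l p₁ p₂ p₃ l₁ l₀ 1).hom u
      have e : (u ≫ (biprod.map φ₀ (𝟙 p₃) ≫ g')) ≫ biprod.lift (f' ≫ g) (f' ≫ γ₁)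
          = u ≫ biprod.map φ₀ (𝟙 p₃) ≫ (g' ≫ biprod.lift (f' ≫ g) (f' ≫ γ₁)) := by
        simp only [Category.assoc]
      rw [e, key, Limits.comp_zero, Limits.comp_zero]
      rfl
  | 2 => by
      have key : biprod.lift φ₁ (0 : l₁ ⟶ p₃) ≫ biprod.map φ₀ (𝟙 p₃) = 0 := by
        apply biprod.hom_ext
        · simp only [Category.assoc, biprod.map_fst, Limits.zero_comp]
          rw [← Category.assoc, biprod.lift_fst, hφ]
        · simp only [Category.assoc, biprod.map_snd, Limits.zero_comp]
          rw [← Category.assoc, biprod.lift_snd, Limits.zero_comp]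
      ext u
      change (l ⟶ l₁) at u
      show (u ≫ biprod.lift φ₁ 0) ≫ (biprod.map φ₀ (𝟙 p₃) ≫ g')
        = (0 : calPX l p₁ p₂ p₃ l₁ l₀ 4 ⟶ calPX l p₁ p₂ p₃ l₁ l₀ 2).hom u
      have e : (u ≫ biprod.lift φ₁ 0) ≫ (biprod.map φ₀ (𝟙 p₃) ≫ g')
          = u ≫ (biprod.lift φ₁ 0 ≫ biprod.map φ₀ (𝟙 p₃)) ≫ g' := by
        simp only [Category.assoc]
      rw [e, key, Limits.zero_comp, Limits.comp_zero]
      rfl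
  | _ + 3 => Limits.zero_comp

/-- The complex `𝒫_A` of projective right `A = E(l,l)`-modules
`0 → E(l,l₁) →(φ₁,0)ᵀ∗→ E(l, l₀⊞p₃) →ψ∗→ E(l,p₂) →(gf',γ₁f')ᵀ∗→ E(l, p₁⊞l₁)
→(−γ₀,φ₁)∗→ E(l,l₀)` (homological degrees 4, 3, 2, 1, 0), where
`ψ = diag(φ₀, id) ≫ g'`. -/
noncomputable def calPComplex
    (g : Ωm ⟶ p₁) (f : p₁ ⟶ m) (g' : m ⊞ p₃ ⟶ p₂) (f' : p₂ ⟶ Ωm)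
    (φ₁ : l₁ ⟶ l₀) (φ₀ : l₀ ⟶ m) (γ₁ : Ωm ⟶ l₁) (γ₀ : p₁ ⟶ l₀)
    (h2 : g' ≫ f' = 0) (hφ : φ₁ ≫ φ₀ = 0) (hpo : g ≫ γ₀ = γ₁ ≫ φ₁) :
    ChainComplex (ModuleCat.{v'} ((End l)ᵐᵒᵖ)) ℕ :=
  ChainComplex.of (calPX l p₁ p₂ p₃ l₁ l₀) (calPd l g g' f' φ₁ φ₀ γ₁ γ₀)
    (calPsq l g f g' f' φ₁ φ₀ γ₁ γ₀ h2 hφ hpo)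

/-- The two-term complex `P_A : C(l,l₁) →φ₁∗→ C(l,l₀)` of right `A = E(l,l)`-modules
(homological degrees 1, 0). -/
noncomputable def PAcomplex (φ₁ : l₁ ⟶ l₀) :
    ChainComplex (ModuleCat.{v'} ((End l)ᵐᵒᵖ)) ℕ :=
  twoTermChain
    (M := ModuleCat.of ((End l)ᵐᵒᵖ) (S.SHom k l l₁))
    (N := ModuleCat.of ((End l)ᵐᵒᵖ) (S.SHom k l l₀))
    (ModuleCat.ofHom (postSLinOp k S φ₁))

/-- The degreewise projection `Φ : 𝒫_A → P_A`: in degree 1 the composition of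
`(0, id_{l₁})∗ : E(l, p₁⊞l₁) → E(l,l₁)` with the projection `E(l,l₁) → C(l,l₁)`, in
degree 0 the projection `E(l,l₀) → C(l,l₀)`, and `0` in higher degrees. -/
noncomputable def PhiMap
    (g : Ωm ⟶ p₁) (f : p₁ ⟶ m) (g' : m ⊞ p₃ ⟶ p₂) (f' : p₂ ⟶ Ωm)
    (φ₁ : l₁ ⟶ l₀) (φ₀ : l₀ ⟶ m) (γ₁ : Ωm ⟶ l₁) (γ₀ : p₁ ⟶ l₀)
    (hp₁ : S.IsProj p₁) (hp₂ : S.IsProj p₂)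
    (h2 : g' ≫ f' = 0) (hφ : φ₁ ≫ φ₀ = 0) (hpo : g ≫ γ₀ = γ₁ ≫ φ₁) :
    calPComplex l g f g' f' φ₁ φ₀ γ₁ γ₀ h2 hφ hpo ⟶ PAcomplex k S l φ₁ :=
  ChainComplex.ofHom
    (X := calPComplex l g f g' f' φ₁ φ₀ γ₁ γ₀ h2 hφ hpo) (Y := PAcomplex k S l φ₁)
    (fun n => match n with
      | 0 => ModuleCat.ofHom (toSLinOp k S l l₀)
      | 1 => ModuleCat.ofHom ((toSLinOp k S l l₁).comp (postcompL (biprod.snd : p₁ ⊞ l₁ ⟶ l₁)))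
      | _ + 2 => 0)
    (fun n => by
     dsimp only [calPComplex, PAcomplex, twoTermChain]
     rw [ChainComplex.of_d, ChainComplex.of_d]
     exact match n with
      | 0 => by
          ext u
          change (l ⟶ p₁ ⊞ l₁) at u
          show S.toS k ((u ≫ biprod.snd) ≫ φ₁) = S.toS k (u ≫ biprod.desc (-γ₀) φ₁)
          show Submodule.Quotient.mk _ = Submodule.Quotient.mk _
          rw [Submodule.Quotient.eq]
          have e : (u ≫ biprod.snd) ≫ φ₁ - u ≫ biprod.desc (-γ₀) φ₁
              = (u ≫ biprod.fst) ≫ γ₀ := by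
            rw [biprod.desc_eq]
            simp only [Preadditive.comp_add, Preadditive.comp_neg, Category.assoc,
              Preadditive.comp_sub]
            abel
          rw [e]
          exact Submodule.subset_span ⟨p₁, u ≫ biprod.fst, γ₀, hp₁, rfl⟩
      | 1 => by
          ext u
          change (l ⟶ p₂) at u
          show (0 : S.SHom k l l₁)
            = S.toS k ((u ≫ biprod.lift (f' ≫ g) (f' ≫ γ₁)) ≫ biprod.snd)
          have e : (u ≫ biprod.lift (f' ≫ g) (f' ≫ γ₁)) ≫ biprod.snd
              = u ≫ (f' ≫ γ₁) := by
            simp [biprod.lift_snd, Category.assoc]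
          rw [e]
          symm
          show Submodule.Quotient.mk _ = 0
          rw [Submodule.Quotient.mk_eq_zero]
          exact Submodule.subset_span ⟨p₂, u, f' ≫ γ₁, hp₂, rfl⟩
      | n + 2 => by
          ext u
          rfl)

end CalP

end Paper

/-!
In degrees `≥ 2` the target vanishes, so there one shows that `𝒫_A` is exact: in degrees 4
and 3 this follows from the conflations `l₁ → l₀ → m` and `m ⊕ p₃ → p₂ → Ωm`, in degree 2
from the fact that `E(l, φ₀)` is surjective, because `C(l, Σl₁) = 0` for rigid `l`.
In degrees 1 and 0 homology is compared elementwise: stable boundaries in degree 0 and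
stable cycles in degree 1 lift along the deflation `(-γ₀, φ₁)` of the push-out conflation
`Ωm → p₁ ⊕ l₁ → l₀`, since the errors factor through projectives. A cycle
`s ≫ (g, γ₁)` of `𝒫_A` whose `l₁`-component is stably zero is a boundary: `s : l → Ωm` is
then stably zero because `C(Σl, l₀) = 0` (as `Σ²l ≅ l`), so `s` factors through `f'`.
-/

open CategoryTheory Limits

namespace CategoryTheory.ShortComplex

variable {R : Type*} [Ring R] {S₁ S₂ : ShortComplex (ModuleCat R)} (φ : S₁ ⟶ S₂)

lemma moduleCat_comm₁₂_apply (x₁ : S₁.X₁) : S₂.f.hom (φ.τ₁.hom x₁) = φ.τ₂.hom (S₁.f.hom x₁) :=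
  LinearMap.congr_fun (congrArg ModuleCat.Hom.hom φ.comm₁₂) x₁

lemma moduleCat_comm₂₃_apply (x₂ : S₁.X₂) : S₂.g.hom (φ.τ₂.hom x₂) = φ.τ₃.hom (S₁.g.hom x₂) :=
  LinearMap.congr_fun (congrArg ModuleCat.Hom.hom φ.comm₂₃) x₂

def moduleCatLeftHomologyMapData :
    LeftHomologyMapData φ S₁.moduleCatLeftHomologyData S₂.moduleCatLeftHomologyData :=
  let φK : LinearMap.ker S₁.g.hom →ₗ[R] LinearMap.ker S₂.g.hom :=
    φ.τ₂.hom.restrict fun x hx => by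
      rw [LinearMap.mem_ker] at hx ⊢
      rw [moduleCat_comm₂₃_apply, hx, map_zero]
  { φK := ModuleCat.ofHom φK
    φH := ModuleCat.ofHom <| Submodule.mapQ _ _ φK <| by
      rintro _ ⟨x₁, rfl⟩
      exact ⟨φ.τ₁.hom x₁, Subtype.ext (moduleCat_comm₁₂_apply φ x₁)⟩
    commi := rfl
    commf' := by ext x₁; exact Subtype.ext (moduleCat_comm₁₂_apply φ x₁).symm
    commπ := rfl }

lemma moduleCat_quasiIso_of_forall
    (hinj : ∀ x₂ : S₁.X₂, S₁.g.hom x₂ = 0 → ∀ y₁ : S₂.X₁, φ.τ₂.hom x₂ = S₂.f.hom y₁ →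
      ∃ x₁ : S₁.X₁, S₁.f.hom x₁ = x₂)
    (hsurj : ∀ y₂ : S₂.X₂, S₂.g.hom y₂ = 0 →
      ∃ x₂ : S₁.X₂, S₁.g.hom x₂ = 0 ∧ ∃ y₁ : S₂.X₁, φ.τ₂.hom x₂ + S₂.f.hom y₁ = y₂) :
    QuasiIso φ := by
  let γ := moduleCatLeftHomologyMapData φ
  suffices IsIso γ.φH by
    rw [quasiIso_iff, γ.homologyMap_eq]
    infer_instance
  rw [ConcreteCategory.isIso_iff_bijective]
  constructor
  · rw [injective_iff_map_eq_zero]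
    intro a ha
    obtain ⟨⟨x₂, hx₂⟩, rfl⟩ := Submodule.Quotient.mk_surjective _ a
    obtain ⟨y₁, hy₁⟩ := (Submodule.Quotient.mk_eq_zero _).1 ha
    obtain ⟨x₁, rfl⟩ := hinj x₂ hx₂ y₁ (congrArg Subtype.val hy₁).symm
    exact (Submodule.Quotient.mk_eq_zero _).2 ⟨x₁, rfl⟩
  · intro b
    obtain ⟨⟨y₂, hy₂⟩, rfl⟩ := Submodule.Quotient.mk_surjective _ b
    obtain ⟨x₂, hx₂, y₁, rfl⟩ := hsurj y₂ hy₂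
    refine ⟨Submodule.Quotient.mk ⟨x₂, hx₂⟩, (Submodule.Quotient.eq _).2 ⟨-y₁, ?_⟩⟩
    ext
    show S₂.f.hom (-y₁) = φ.τ₂.hom x₂ - (φ.τ₂.hom x₂ + S₂.f.hom y₁)
    rw [map_neg]
    abel

end CategoryTheory.ShortComplex

namespace HomologicalComplex

variable {R : Type*} [Ring R] {ι : Type*} {c : ComplexShape ι}
  {K L : HomologicalComplex (ModuleCat R) c} (φ : K ⟶ L)

lemma moduleCat_quasiIsoAt_of_forall (i j k : ι) (hi : c.prev j = i) (hk : c.next j = k)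
    (hinj : ∀ x₂ : K.X j, (K.d j k).hom x₂ = 0 → ∀ y₁ : L.X i,
      (φ.f j).hom x₂ = (L.d i j).hom y₁ → ∃ x₁ : K.X i, (K.d i j).hom x₁ = x₂)
    (hsurj : ∀ y₂ : L.X j, (L.d j k).hom y₂ = 0 → ∃ x₂ : K.X j, (K.d j k).hom x₂ = 0 ∧
      ∃ y₁ : L.X i, (φ.f j).hom x₂ + (L.d i j).hom y₁ = y₂) :
    QuasiIsoAt φ j :=
  (quasiIsoAt_iff' φ i j k hi hk).2 (ShortComplex.moduleCat_quasiIso_of_forall _ hinj hsurj)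

lemma moduleCat_quasiIsoAt_of_subsingleton (i j k : ι) (hi : c.prev j = i) (hk : c.next j = k)
    [Subsingleton (L.X j)]
    (hK : ∀ x₂ : K.X j, (K.d j k).hom x₂ = 0 → ∃ x₁ : K.X i, (K.d i j).hom x₁ = x₂) :
    QuasiIsoAt φ j :=
  moduleCat_quasiIsoAt_of_forall φ i j k hi hk (fun x₂ hx₂ _ _ => hK x₂ hx₂)
    (fun _ _ => ⟨0, map_zero _, 0, Subsingleton.elim _ _⟩)

end HomologicalComplex

namespace Paper

universe v u

namespace ExactStr

variable {E : Type u} [Category.{v} E] [Preadditive E] [HasBinaryBiproducts E]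
  (S : ExactStr E) {x y z : E} {i : x ⟶ y} {p : y ⟶ z}

lemma mono_of_conf (h : S.conf i p) : Mono i :=
  Fork.IsLimit.mono (S.conf_isKernel h).some

lemma exists_comp_eq_of_conf (h : S.conf i p) {w : E} (u : w ⟶ y) (hu : u ≫ p = 0) :
    ∃ v : w ⟶ x, v ≫ i = u :=
  ⟨_, (KernelFork.IsLimit.lift' (S.conf_isKernel h).some u hu).2⟩

lemma conf_id_zero (x : E) (hz : IsZero z) : S.conf (𝟙 x) (0 : x ⟶ z) := by
  simpa using S.conf_iso (Iso.refl x) (isoBiprodZero hz).symm (Iso.refl z) (S.conf_split x z)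

end ExactStr

variable {E : Type u} [Category.{v} E] [Preadditive E] [HasFiniteBiproducts E]
  [HasBinaryBiproducts E] {k : Type} [Field k] [CategoryTheory.Linear k E] {S : Frobenius E}

namespace Frobenius

lemma comp_mem_projIdeal {x y P : E} (hP : S.IsProj P) (a : x ⟶ P) (b : P ⟶ y) :
    a ≫ b ∈ S.projIdeal k x y :=
  Submodule.subset_span ⟨P, a, b, hP, rfl⟩

lemma toS_eq_toS_iff {x y : E} {f g : x ⟶ y} :
    S.toS k f = S.toS k g ↔ f - g ∈ S.projIdeal k x y :=
  Submodule.Quotient.eq _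

lemma toS_eq_zero_iff {x y : E} {f : x ⟶ y} : S.toS k f = 0 ↔ f ∈ S.projIdeal k x y :=
  Submodule.Quotient.mk_eq_zero _

lemma mem_projIdeal_of_snd_mem {x P Y : E} (hP : S.IsProj P) {u : x ⟶ P ⊞ Y}
    (hu : u ≫ biprod.snd ∈ S.projIdeal k x Y) : u ∈ S.projIdeal k x (P ⊞ Y) := by
  rw [← Category.comp_id u, ← biprod.total, Preadditive.comp_add, ← Category.assoc,
    ← Category.assoc]
  exact add_mem (comp_mem_projIdeal hP _ _) (S.rightComp_projIdeal k hu _)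

lemma exists_mem_projIdeal_comp_eq {x y z : E} {p : y ⟶ z} (hp : S.IsDeflation p)
    {u : x ⟶ z} (hu : u ∈ S.projIdeal k x z) :
    ∃ w ∈ S.projIdeal k x y, w ≫ p = u := by
  induction hu using Submodule.span_induction with
  | mem _ h =>
    obtain ⟨P, a, b, hP, rfl⟩ := h
    obtain ⟨b', hb'⟩ := hP p hp b
    exact ⟨a ≫ b', comp_mem_projIdeal hP a b', by rw [Category.assoc, hb']⟩
  | zero => exact ⟨0, zero_mem _, zero_comp⟩
  | add _ _ _ _ ha hb =>
    obtain ⟨wa, hwa, rfl⟩ := ha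
    obtain ⟨wb, hwb, rfl⟩ := hb
    exact ⟨wa + wb, add_mem hwa hwb, Preadditive.add_comp _ _ _ _ _ _⟩
  | smul c _ _ ha =>
    obtain ⟨wa, hwa, rfl⟩ := ha
    exact ⟨c • wa, Submodule.smul_mem _ c hwa, Linear.smul_comp _ _ _ _ _ _⟩

end Frobenius

namespace SC

lemma toSC_id (x : E) : toSC S k (𝟙 x) = 𝟙 (of S k x) := rfl

lemma toSC_sum {x y : E} {ι : Type*} (s : Finset ι) (f : ι → (x ⟶ y)) :
    toSC S k (∑ i ∈ s, f i) = ∑ i ∈ s, toSC S k (f i) :=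
  map_sum (S.projIdeal k x y).mkQ f s

lemma toSC_eq_toSC_iff {x y : E} {f g : x ⟶ y} :
    toSC S k f = toSC S k g ↔ f - g ∈ S.projIdeal k x y :=
  Submodule.Quotient.eq _

lemma toSC_eq_zero_iff {x y : E} {f : x ⟶ y} : toSC S k f = 0 ↔ f ∈ S.projIdeal k x y :=
  Submodule.Quotient.mk_eq_zero _

end SC

lemma hom_eq_zero_of_inAdd {D : Type*} [Category D] [Preadditive D] (F : SC S k ⥤ D)
    [F.Additive] {w : D} {x y : E} (ha : InAdd x y)
    (hz : ∀ d : w ⟶ F.obj (SC.of S k x), d = 0) (q : w ⟶ F.obj (SC.of S k y)) : q = 0 := by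
  obtain ⟨n, s, t, hst⟩ := ha
  have hs : F.map (SC.toSC S k s) = ∑ i, F.map (SC.toSC S k (s ≫ biproduct.π _ i)) ≫
      F.map (SC.toSC S k (biproduct.ι (fun _ : Fin n => x) i)) := by
    conv_lhs => rw [← Category.comp_id s, ← biproduct.total, Preadditive.comp_sum]
    simp only [← Category.assoc, SC.toSC_sum, F.map_sum, ← F.map_comp, SC.toSC_comp]
  calc q = q ≫ F.map (SC.toSC S k s) ≫ F.map (SC.toSC S k t) := by
        rw [← F.map_comp, SC.toSC_comp, hst, SC.toSC_id, F.map_id, Category.comp_id]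
    _ = 0 := by
        rw [hs, Preadditive.sum_comp, Preadditive.comp_sum]
        exact Finset.sum_eq_zero fun i _ => by
          rw [← Category.assoc, ← Category.assoc, hz (q ≫ _), zero_comp, zero_comp]

namespace TriData

variable (T : TriData S k)

lemma exists_dtri_id (w : SC S k) :
    ∃ (z : SC S k) (h : z ⟶ T.susp.obj w), T.dtri (𝟙 w) 0 h := by
  obtain ⟨z, hz⟩ := HasZeroObject.zero (C := E)
  exact ⟨SC.of S k z, T.conf_dtri (S.conf_id_zero w.un hz)⟩

lemma coyoneda_exact₃ {x y z w : SC S k} {a : x ⟶ y} {b : y ⟶ z} {c : z ⟶ T.susp.obj x}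
    (hd : T.dtri a b c) (u : w ⟶ z) (hu : u ≫ c = 0) : ∃ v : w ⟶ y, v ≫ b = u := by
  have := T.equiv
  obtain ⟨z₀, h₀, hw⟩ := T.exists_dtri_id w
  obtain ⟨c₀, -, hc₀⟩ := T.dtri_ext (T.dtri_rot hw) (T.dtri_rot (T.dtri_rot hd)) u 0
    (by rw [hu, zero_comp])
  obtain ⟨v, rfl⟩ := T.susp.map_surjective c₀
  refine ⟨v, T.susp.map_injective ?_⟩
  simpa using hc₀.symm

lemma hom_susp_eq_zero {x : SC S k} (hr : T.Rigid x) (hsx : T.SuspSqFix x)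
    (d : T.susp.obj x ⟶ x) : d = 0 := by
  have := T.equiv
  obtain ⟨ψ⟩ := hsx
  obtain ⟨d', hd'⟩ := T.susp.map_surjective (d ≫ ψ.inv)
  rw [← cancel_mono ψ.inv, ← hd', hr d', T.susp.map_zero, zero_comp]

end TriData

section RigidConflations

variable (T : TriData S k) {x X Y Z : E} {i : X ⟶ Y} {p : Y ⟶ Z}

lemma exists_comp_eq_of_conf_of_rigid (hx : T.Rigid (SC.of S k x)) (hX : InAdd x X)
    (h : S.conf i p) (v : x ⟶ Z) : ∃ w : x ⟶ Y, w ≫ p = v := by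
  obtain ⟨δ, hδ⟩ := T.conf_dtri h
  have := T.additive
  obtain ⟨w₀, hw₀⟩ := T.coyoneda_exact₃ hδ (SC.toSC S k v)
    (hom_eq_zero_of_inAdd T.susp hX hx _)
  obtain ⟨w₀, rfl⟩ := SC.toSC_surjective _ _ w₀
  obtain ⟨w₁, -, hw₁⟩ := Frobenius.exists_mem_projIdeal_comp_eq ⟨X, i, h⟩
    (SC.toSC_eq_toSC_iff.1 hw₀.symm)
  exact ⟨w₀ + w₁, by rw [Preadditive.add_comp, hw₁, add_sub_cancel]⟩

lemma mem_projIdeal_of_comp_mem_of_conf (hx : T.Rigid (SC.of S k x))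
    (hsx : T.SuspSqFix (SC.of S k x)) (hZ : InAdd x Z) (h : S.conf i p) {s : x ⟶ X}
    (hs : s ≫ i ∈ S.projIdeal k x Y) : s ∈ S.projIdeal k x X := by
  have := T.equiv
  have := T.additive
  obtain ⟨δ, hδ⟩ := T.conf_dtri h
  have hsi : T.susp.map (SC.toSC S k s) ≫ (-(T.susp.map (SC.toSC S k i))) = 0 := by
    rw [Preadditive.comp_neg, ← T.susp.map_comp, SC.toSC_comp,
      SC.toSC_eq_zero_iff.2 hs, T.susp.map_zero, neg_zero]
  obtain ⟨d, hd⟩ := T.coyoneda_exact₃ (T.dtri_rot hδ) _ hsi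
  rw [hom_eq_zero_of_inAdd (𝟭 _) hZ (T.hom_susp_eq_zero hx hsx) d, zero_comp] at hd
  have hs0 : SC.toSC S k s = 0 := T.susp.map_injective (by rw [← hd, T.susp.map_zero])
  exact SC.toSC_eq_zero_iff.1 hs0

end RigidConflations

section PhiMap

variable {l m Ωm p₁ p₂ p₃ l₁ l₀ : E} {g : Ωm ⟶ p₁} {f : p₁ ⟶ m} {g' : m ⊞ p₃ ⟶ p₂}
  {f' : p₂ ⟶ Ωm} {φ₁ : l₁ ⟶ l₀} {φ₀ : l₀ ⟶ m} {γ₁ : Ωm ⟶ l₁} {γ₀ : p₁ ⟶ l₀}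
  (hp₁ : S.IsProj p₁) (hp₂ : S.IsProj p₂)
  (h2 : g' ≫ f' = 0) (hφ : φ₁ ≫ φ₀ = 0) (hpo : g ≫ γ₀ = γ₁ ≫ φ₁)

instance (n : ℕ) : Subsingleton ((PAcomplex k S l φ₁).X (n + 2)) :=
  inferInstanceAs (Subsingleton PUnit)

instance (n : ℕ) :
    Subsingleton ((calPComplex l g f g' f' φ₁ φ₀ γ₁ γ₀ h2 hφ hpo).X (n + 5)) :=
  inferInstanceAs (Subsingleton PUnit)

lemma quasiIsoAt_phiMap_zero
    (hconfpo : S.conf (biprod.lift g γ₁) (biprod.desc (-γ₀) φ₁)) :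
    QuasiIsoAt (PhiMap k S l g f g' f' φ₁ φ₀ γ₁ γ₀ hp₁ hp₂ h2 hφ hpo) 0 := by
  refine HomologicalComplex.moduleCat_quasiIsoAt_of_forall _ 1 0 0 (by simp) (by simp) ?_ ?_
  · intro x _ y hxy
    change l ⟶ l₀ at x
    obtain ⟨v, rfl⟩ := S.toS_surjective k l l₁ y
    change S.toS k x = S.toS k (v ≫ φ₁) at hxy
    obtain ⟨w, -, hw⟩ :=
      Frobenius.exists_mem_projIdeal_comp_eq ⟨_, _, hconfpo⟩ (Frobenius.toS_eq_toS_iff.1 hxy)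
    refine ⟨w + v ≫ biprod.inr, ?_⟩
    change (w + v ≫ biprod.inr) ≫ biprod.desc (-γ₀) φ₁ = x
    rw [Preadditive.add_comp, hw, Category.assoc, biprod.inr_desc, sub_add_cancel]
  · intro y _
    obtain ⟨x, rfl⟩ := S.toS_surjective k l l₀ y
    refine ⟨x, by rw [HomologicalComplex.shape _ 0 0 (by simp)]; rfl, 0, ?_⟩
    rw [map_zero, add_zero]
    rfl

lemma quasiIsoAt_phiMap_one (T : TriData S k) (hl : T.Rigid (SC.of S k l))
    (hsl : T.SuspSqFix (SC.of S k l)) (hal₀ : InAdd l l₀) (hconf₂ : S.conf g' f')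
    (hconfpo : S.conf (biprod.lift g γ₁) (biprod.desc (-γ₀) φ₁)) :
    QuasiIsoAt (PhiMap k S l g f g' f' φ₁ φ₀ γ₁ γ₀ hp₁ hp₂ h2 hφ hpo) 1 := by
  refine HomologicalComplex.moduleCat_quasiIsoAt_of_forall _ 2 1 0 (by simp) (by simp) ?_ ?_
  · intro x hx _ hxy
    change l ⟶ p₁ ⊞ l₁ at x
    change x ≫ biprod.desc (-γ₀) φ₁ = 0 at hx
    change S.toS k (x ≫ biprod.snd) = 0 at hxy
    have hx' := Frobenius.mem_projIdeal_of_snd_mem hp₁ (Frobenius.toS_eq_zero_iff.1 hxy)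
    obtain ⟨s, rfl⟩ := S.exists_comp_eq_of_conf hconfpo x hx
    obtain ⟨t, -, ht⟩ := Frobenius.exists_mem_projIdeal_comp_eq ⟨_, _, hconf₂⟩
      (mem_projIdeal_of_comp_mem_of_conf T hl hsl hal₀ hconfpo hx')
    refine ⟨t, ?_⟩
    change t ≫ biprod.lift (f' ≫ g) (f' ≫ γ₁) = s ≫ biprod.lift g γ₁
    rw [← ht, Category.assoc]
    exact biprod.hom_ext _ _ (by simp) (by simp)
  · intro y hy
    obtain ⟨v, rfl⟩ := S.toS_surjective k l l₁ y
    change S.toS k (v ≫ φ₁) = 0 at hy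
    obtain ⟨w, hw, hwv⟩ :=
      Frobenius.exists_mem_projIdeal_comp_eq ⟨_, _, hconfpo⟩ (Frobenius.toS_eq_zero_iff.1 hy)
    refine ⟨v ≫ biprod.inr - w, ?_, 0, ?_⟩
    · change (v ≫ biprod.inr - w) ≫ biprod.desc (-γ₀) φ₁ = 0
      rw [Preadditive.sub_comp, Category.assoc, biprod.inr_desc, hwv, sub_self]
    · rw [map_zero, add_zero]
      change S.toS k ((v ≫ biprod.inr - w) ≫ biprod.snd) = S.toS k v
      rw [Frobenius.toS_eq_toS_iff, Preadditive.sub_comp, Category.assoc, biprod.inr_snd,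
        Category.comp_id, sub_sub_cancel_left]
      exact neg_mem (S.rightComp_projIdeal k hw _)

lemma quasiIsoAt_phiMap_two (T : TriData S k) (hl : T.Rigid (SC.of S k l))
    (hal₁ : InAdd l l₁) (hconf₁ : S.conf g f) (hconf₂ : S.conf g' f') (hconfφ : S.conf φ₁ φ₀) :
    QuasiIsoAt (PhiMap k S l g f g' f' φ₁ φ₀ γ₁ γ₀ hp₁ hp₂ h2 hφ hpo) 2 := by
  refine HomologicalComplex.moduleCat_quasiIsoAt_of_subsingleton _ 3 2 1 (by simp) (by simp) ?_
  intro u hu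
  change l ⟶ p₂ at u
  change u ≫ biprod.lift (f' ≫ g) (f' ≫ γ₁) = 0 at hu
  have := S.mono_of_conf hconf₁
  have huf : u ≫ f' = 0 := (cancel_mono g).1 (by simpa using hu =≫ biprod.fst)
  obtain ⟨v, rfl⟩ := S.exists_comp_eq_of_conf hconf₂ u huf
  obtain ⟨w, hw⟩ := exists_comp_eq_of_conf_of_rigid T hl hal₁ hconfφ (v ≫ biprod.fst)
  refine ⟨biprod.lift w (v ≫ biprod.snd), ?_⟩
  change biprod.lift w (v ≫ biprod.snd) ≫ biprod.map φ₀ (𝟙 p₃) ≫ g' = v ≫ g'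
  rw [← Category.assoc]
  congr 1
  exact biprod.hom_ext _ _ (by simp [hw]) (by simp)

lemma quasiIsoAt_phiMap_three (hconf₂ : S.conf g' f') (hconfφ : S.conf φ₁ φ₀) :
    QuasiIsoAt (PhiMap k S l g f g' f' φ₁ φ₀ γ₁ γ₀ hp₁ hp₂ h2 hφ hpo) 3 := by
  refine HomologicalComplex.moduleCat_quasiIsoAt_of_subsingleton _ 4 3 2 (by simp) (by simp) ?_
  intro u hu
  change l ⟶ l₀ ⊞ p₃ at u
  change u ≫ biprod.map φ₀ (𝟙 p₃) ≫ g' = 0 at hu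
  have := S.mono_of_conf hconf₂
  have hu' : u ≫ biprod.map φ₀ (𝟙 p₃) = 0 :=
    (cancel_mono g').1 (by rw [Category.assoc, hu, zero_comp])
  obtain ⟨v, hv⟩ := S.exists_comp_eq_of_conf hconfφ (u ≫ biprod.fst)
    (by simpa using hu' =≫ biprod.fst)
  refine ⟨v, ?_⟩
  change v ≫ biprod.lift φ₁ 0 = u
  exact biprod.hom_ext _ _ (by simp [hv]) (by simpa using (hu' =≫ biprod.snd).symm)

lemma quasiIsoAt_phiMap_four (hconfφ : S.conf φ₁ φ₀) :
    QuasiIsoAt (PhiMap k S l g f g' f' φ₁ φ₀ γ₁ γ₀ hp₁ hp₂ h2 hφ hpo) 4 := by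
  refine HomologicalComplex.moduleCat_quasiIsoAt_of_subsingleton _ 5 4 3 (by simp) (by simp) ?_
  intro u hu
  change l ⟶ l₁ at u
  change u ≫ biprod.lift φ₁ 0 = 0 at hu
  have := S.mono_of_conf hconfφ
  have hu0 : u = 0 := (cancel_mono φ₁).1 (by simpa using hu =≫ biprod.fst)
  exact ⟨0, by rw [map_zero, hu0]; rfl⟩

lemma quasiIsoAt_phiMap_add_five (n : ℕ) :
    QuasiIsoAt (PhiMap k S l g f g' f' φ₁ φ₀ γ₁ γ₀ hp₁ hp₂ h2 hφ hpo) (n + 5) :=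
  HomologicalComplex.moduleCat_quasiIsoAt_of_subsingleton _ (n + 6) (n + 5) (n + 4) (by simp)
    (by simp) fun _ _ => ⟨0, Subsingleton.elim _ _⟩

end PhiMap

end Paper

open CategoryTheory Limits Paper in
theorem statement_14_general
    (k : Type) [Field k]
    (E : Type u) [Category.{v} E] [Preadditive E] [HasFiniteBiproducts E]
    [HasBinaryBiproducts E] [CategoryTheory.Linear k E]
    (S : Frobenius E) (T : TriData S k)
    (l m : E)
    (hl : T.MaxRigid (SC.of S k l))
    (hsl : T.SuspSqFix (SC.of S k l))
    (Ωm p₁ p₂ p₃ : E)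
    (hp₁ : S.IsProj p₁) (hp₂ : S.IsProj p₂)
    (g : Ωm ⟶ p₁) (f : p₁ ⟶ m) (g' : m ⊞ p₃ ⟶ p₂) (f' : p₂ ⟶ Ωm)
    (hconf₁ : S.conf g f) (hconf₂ : S.conf g' f')
    (l₁ l₀ : E) (hal₁ : InAdd l l₁) (hal₀ : InAdd l l₀)
    (φ₁ : l₁ ⟶ l₀) (φ₀ : l₀ ⟶ m) (hconfφ : S.conf φ₁ φ₀)
    (γ₁ : Ωm ⟶ l₁) (γ₀ : p₁ ⟶ l₀)
    (hpo : g ≫ γ₀ = γ₁ ≫ φ₁)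
    (hconfpo : S.conf (biprod.lift g γ₁) (biprod.desc (-γ₀) φ₁)) :
    QuasiIso
      (PhiMap k S l g f g' f' φ₁ φ₀ γ₁ γ₀ hp₁ hp₂
        (S.conf_comp hconf₂) (S.conf_comp hconfφ) hpo) := by
  refine ⟨fun j => ?_⟩
  match j with
  | 0 => exact quasiIsoAt_phiMap_zero hp₁ hp₂ _ _ hpo hconfpo
  | 1 => exact quasiIsoAt_phiMap_one hp₁ hp₂ _ _ hpo T hl.1 hsl hal₀ hconf₂ hconfpo
  | 2 => exact quasiIsoAt_phiMap_two hp₁ hp₂ _ _ hpo T hl.1 hal₁ hconf₁ hconf₂ hconfφ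
  | 3 => exact quasiIsoAt_phiMap_three hp₁ hp₂ _ _ hpo hconf₂ hconfφ
  | 4 => exact quasiIsoAt_phiMap_four hp₁ hp₂ _ _ hpo hconfφ
  | n + 5 => exact quasiIsoAt_phiMap_add_five hp₁ hp₂ _ _ hpo n

open CategoryTheory Limits Paper in
/-- **Statement 14** (Lemma 3.6).
In the setting of the paper (see Statement 13), the degreewise projection
`Φ : 𝒫_A → P_A` — in degree 1 the composition of `(0, id_{l₁})∗` with the projection
`E(l,l₁) → C(l,l₁)`, in degree 0 the projection `E(l,l₀) → C(l,l₀)` — is a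
quasi-isomorphism of complexes of right `A = E(l,l)`-modules, where `P_A` is the
two-term complex `C(l,l₁) →φ₁∗→ C(l,l₀)` in homological degrees 1, 0. -/
theorem statement_14
    (k : Type) [Field k] [IsAlgClosed k]
    (E : Type u) [Category.{v} E] [Preadditive E] [HasFiniteBiproducts E]
    [HasBinaryBiproducts E] [CategoryTheory.Linear k E]
    (S : Frobenius E) (T : TriData S k)
    (l m : E)
    (hlg : S.Good l) (hmg : S.Good m)
    (hl : T.MaxRigid (SC.of S k l)) (hm : T.MaxRigid (SC.of S k m))
    (hsl : T.SuspSqFix (SC.of S k l)) (hsm : T.SuspSqFix (SC.of S k m))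
    (Ωm p₁ p₂ p₃ : E)
    (hp₁ : S.IsProj p₁) (hp₂ : S.IsProj p₂) (hp₃ : S.IsProj p₃)
    (g : Ωm ⟶ p₁) (f : p₁ ⟶ m) (g' : m ⊞ p₃ ⟶ p₂) (f' : p₂ ⟶ Ωm)
    (hconf₁ : S.conf g f) (hconf₂ : S.conf g' f')
    (l₁ l₀ : E) (hal₁ : InAdd l l₁) (hal₀ : InAdd l l₀)
    (φ₁ : l₁ ⟶ l₀) (φ₀ : l₀ ⟶ m) (hconfφ : S.conf φ₁ φ₀)
    (γ₁ : Ωm ⟶ l₁) (γ₀ : p₁ ⟶ l₀)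
    (hpo : g ≫ γ₀ = γ₁ ≫ φ₁) (hpo' : γ₀ ≫ φ₀ = f)
    (hconfpo : S.conf (biprod.lift g γ₁) (biprod.desc (-γ₀) φ₁)) :
    QuasiIso
      (PhiMap k S l g f g' f' φ₁ φ₀ γ₁ γ₀ hp₁ hp₂
        (S.conf_comp hconf₂) (S.conf_comp hconfφ) hpo) :=
  statement_14_general k E S T l m hl hsl Ωm p₁ p₂ p₃ hp₁ hp₂ g f g' f' hconf₁ hconf₂ l₁ l₀ hal₁
    hal₀ φ₁ φ₀ hconfφ γ₁ γ₀ hpo hconfpo
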